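/- arXiv:2605.01565 — 2 statements merged into one kernel-verified Lean document; each statement's English description precedes it below -/
import Mathlib

section
/- If x is a vertex of G₂ with Z(x) = S, then the open neighborhood of x in G₂ is the disjoint union of the classes X_T over all nonempty subsets T of the complement S^c = {1,…,m} ∖ S; in particular, the neighborhood of x depends only on S. -/
/-!
By the Chinese remainder theorem `ℤ/nℤ ≅ ∏ᵢ ℤ/pᵢℤ` is a product of fields, so `Z(x)` is the set of
coordinates where `x` vanishes. In a product of fields `x` is a unit iff it vanishes nowhere, and
`(x, y) = ⊤` iff `x` and `y` never vanish at the same coordinate. Hence a vertex `y` is adjacent to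
`x` iff `Z(y)` is disjoint from `Z(x) = S`, i.e. `Z(y) ⊆ Sᶜ`; and `Z(y)` is nonempty because `y`
is not a unit. Distinctness of adjacent vertices is automatic: `Z(x)` is nonempty, so it is not
disjoint from itself.
-/

open Finset

abbrev NN (m : ℕ) (p : Fin m → ℕ) : ℕ := ∏ i, p i

abbrev Vtx (m : ℕ) (p : Fin m → ℕ) : Type :=
  {x : ZMod (NN m p) // x ≠ 0 ∧ ¬ IsUnit x}

/-- The induced subgraph `G₂` of the comaximal graph of `ℤ/nℤ` on nonzero nonunits. -/
def G2 (m : ℕ) (p : Fin m → ℕ) : SimpleGraph (Vtx m p) where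
  Adj x y := x ≠ y ∧ Ideal.span ({x.1, y.1} : Set (ZMod (NN m p))) = ⊤
  symm := by
    constructor
    rintro x y ⟨hxy, h⟩
    exact ⟨hxy.symm, by rwa [Set.pair_comm]⟩
  loopless := by constructor; rintro x ⟨h, -⟩; exact h rfl

/-- The zero-set of `x`: indices `i` where the image of `x` in `ℤ/p_iℤ` is zero. -/
def Z (m : ℕ) (p : Fin m → ℕ) (x : ZMod (NN m p)) : Finset (Fin m) :=
  Finset.univ.filter fun i =>
    (ZMod.castHom (Finset.dvd_prod_of_mem p (Finset.mem_univ i)) (ZMod (p i))) x = 0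

/-- The class `X_S` of vertices of `G₂` with zero-set `S`. -/
def XS (m : ℕ) (p : Fin m → ℕ) (S : Finset (Fin m)) : Set (Vtx m p) :=
  {x | Z m p x.1 = S}

theorem Pi.isCoprime_iff {ι : Type*} {R : ι → Type*} [∀ i, CommSemiring (R i)]
    {f g : ∀ i, R i} : IsCoprime f g ↔ ∀ i, IsCoprime (f i) (g i) := by
  refine ⟨fun h i => h.map (Pi.evalRingHom R i), fun h => ?_⟩
  choose a b hab using h
  exact ⟨a, b, funext hab⟩

theorem RingEquiv.isCoprime_apply_iff {R S : Type*} [CommSemiring R] [CommSemiring S]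
    (e : R ≃+* S) {x y : R} : IsCoprime (e x) (e y) ↔ IsCoprime x y :=
  ⟨fun h => by simpa using h.map e.symm.toRingHom, fun h => h.map e.toRingHom⟩

namespace RingEquiv

variable {R ι : Type*} {K : ι → Type*} [CommRing R] [∀ i, Field (K i)] (e : R ≃+* ∀ i, K i)

theorem isUnit_iff_forall_ne_zero {x : R} : IsUnit x ↔ ∀ i, e x i ≠ 0 := by
  simp only [← MulEquiv.isUnit_map e, Pi.isUnit_iff, isUnit_iff_ne_zero]

theorem isCoprime_iff_forall_ne_zero {x y : R} :
    IsCoprime x y ↔ ∀ i, e x i ≠ 0 ∨ e y i ≠ 0 := by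
  simp only [← e.isCoprime_apply_iff, Pi.isCoprime_iff, Semifield.isCoprime_iff]

end RingEquiv

section ZeroSet

variable {m : ℕ} {p : Fin m → ℕ} [∀ i, Fact (p i).Prime]

noncomputable def crt (hinj : Function.Injective p) : ZMod (NN m p) ≃+* ∀ i, ZMod (p i) :=
  ZMod.prodEquivPi p fun _ _ hij =>
    (Nat.coprime_primes Fact.out Fact.out).mpr fun h => hij (hinj h)

theorem crt_apply (hinj : Function.Injective p) (x : ZMod (NN m p)) (i : Fin m) :
    crt hinj x i = ZMod.castHom (dvd_prod_of_mem p (mem_univ i)) (ZMod (p i)) x :=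
  RingHom.congr_fun (RingHom.ext_zmod ((Pi.evalRingHom _ i).comp (crt hinj).toRingHom) _) x

theorem mem_Z_iff (hinj : Function.Injective p) {x : ZMod (NN m p)} {i : Fin m} :
    i ∈ Z m p x ↔ crt hinj x i = 0 := by
  rw [Z, mem_filter, crt_apply, and_iff_right (mem_univ i)]

theorem Z_eq_empty_iff_isUnit (hinj : Function.Injective p) {x : ZMod (NN m p)} :
    Z m p x = ∅ ↔ IsUnit x := by
  simp only [(crt hinj).isUnit_iff_forall_ne_zero, eq_empty_iff_forall_notMem, mem_Z_iff hinj]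

theorem Z_nonempty (hinj : Function.Injective p) (x : Vtx m p) : (Z m p x.1).Nonempty :=
  nonempty_iff_ne_empty.2 fun h => x.2.2 ((Z_eq_empty_iff_isUnit hinj).1 h)

theorem span_pair_eq_top_iff_disjoint_Z (hinj : Function.Injective p) {x y : ZMod (NN m p)} :
    Ideal.span {x, y} = ⊤ ↔ Disjoint (Z m p x) (Z m p y) := by
  rw [Ideal.span_insert, Ideal.sup_eq_top_iff_isCoprime,
    (crt hinj).isCoprime_iff_forall_ne_zero, disjoint_left]
  simp only [mem_Z_iff hinj, ← not_and_or, not_and]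

theorem G2_adj_iff (hinj : Function.Injective p) {x y : Vtx m p} :
    (G2 m p).Adj x y ↔ Disjoint (Z m p x.1) (Z m p y.1) := by
  refine ⟨fun h => (span_pair_eq_top_iff_disjoint_Z hinj).1 h.2, fun h => ⟨?_, ?_⟩⟩
  · rintro rfl
    exact (Z_nonempty hinj x).ne_empty (disjoint_self.1 h)
  · exact (span_pair_eq_top_iff_disjoint_Z hinj).2 h

end ZeroSet

theorem stmt4_general (m : ℕ) (p : Fin m → ℕ) (hp : ∀ i, (p i).Prime)
    (hmono : StrictMono p) (x : Vtx m p) (S : Finset (Fin m)) (hx : Z m p x.1 = S) :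
    (G2 m p).neighborSet x =
      ⋃ T ∈ {T : Finset (Fin m) | T.Nonempty ∧ T ⊆ Sᶜ}, XS m p T := by
  have : ∀ i, Fact (p i).Prime := fun i => ⟨hp i⟩
  ext y
  simp only [SimpleGraph.mem_neighborSet, G2_adj_iff hmono.injective, hx, Set.mem_iUnion,
    Set.mem_ofPred_eq, XS, exists_prop]
  constructor
  · intro h
    exact ⟨Z m p y.1, ⟨Z_nonempty hmono.injective y, subset_compl_iff_disjoint_left.2 h⟩, rfl⟩
  · rintro ⟨T, ⟨-, hT⟩, hyT⟩
    exact subset_compl_iff_disjoint_left.1 (hyT ▸ hT)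

theorem stmt4 (m : ℕ) (hm : 2 ≤ m) (p : Fin m → ℕ) (hp : ∀ i, (p i).Prime)
    (hmono : StrictMono p) (x : Vtx m p) (S : Finset (Fin m)) (hx : Z m p x.1 = S) :
    (G2 m p).neighborSet x =
      ⋃ T ∈ {T : Finset (Fin m) | T.Nonempty ∧ T ⊆ Sᶜ}, XS m p T :=
  stmt4_general m p hp hmono x S hx
end

section
/- Let W be a set of vertices of G₂ with |W| < ∏_{i=1}^{m−1} (p_i − 1), let u be a vertex with Z(u) = {m} that does not lie in W, and let v ∉ W be a vertex of G₂ with m ∈ Z(v). Then v lies in the same connected component as u in the graph G₂ − W obtained by deleting the vertices of W. -/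
open Finset

/- Pick an index `j` with `v_j ≠ 0` (so `j ≠ m`). By the Chinese remainder theorem there are
`∏_{i ≠ j} (p_i - 1) ≥ ∏_{i ≠ m} (p_i - 1) > |W|` vertices with zero-set `{j}`, so one of them,
`w`, avoids `W`. Since `Z(w)` is disjoint from `Z(v)` and from `Z(u) = {m}`, and elements with
disjoint zero-sets generate the unit ideal, `v - w - u` is a path in `G₂ - W`. -/
open Function

section

variable {m : ℕ} {p : Fin m → ℕ}

lemma mem_Z_iff_prodEquivPi (hpc : Pairwise (Nat.Coprime on p)) {x : ZMod (NN m p)} {i : Fin m} :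
    i ∈ Z m p x ↔ ZMod.prodEquivPi p hpc x i = 0 := by
  simp only [Z, mem_filter, mem_univ, true_and, ZMod.prodEquivPi_apply]

lemma exists_notMem_Z (hpc : Pairwise (Nat.Coprime on p)) {x : ZMod (NN m p)} (hx : x ≠ 0) :
    ∃ i, i ∉ Z m p x := by
  by_contra! h
  exact hx <| (ZMod.prodEquivPi p hpc).map_eq_zero_iff.mp <|
    funext fun i => (mem_Z_iff_prodEquivPi hpc).mp (h i)

lemma ne_zero_of_notMem_Z {x : ZMod (NN m p)} {i : Fin m} (hi : i ∉ Z m p x) : x ≠ 0 := by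
  rintro rfl
  simp [Z] at hi

lemma not_isUnit_of_mem_Z {x : ZMod (NN m p)} {i : Fin m} (hpi : p i ≠ 1) (hi : i ∈ Z m p x) :
    ¬ IsUnit x := fun hx => by
  have := ZMod.nontrivial_iff.mpr hpi
  simp only [Z, mem_filter] at hi
  exact (hx.map _).ne_zero hi.2

lemma isCoprime_of_disjoint_Z (hp : ∀ i, (p i).Prime) (hpc : Pairwise (Nat.Coprime on p))
    {x y : ZMod (NN m p)} (hxy : Disjoint (Z m p x) (Z m p y)) : IsCoprime x y := by
  let e := ZMod.prodEquivPi p hpc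
  have : ∀ i, Fact (p i).Prime := fun i => ⟨hp i⟩
  have hcoord : ∀ i, IsCoprime (e x i) (e y i) := fun i => by
    rw [Semifield.isCoprime_iff, ← not_and_or, ← mem_Z_iff_prodEquivPi, ← mem_Z_iff_prodEquivPi]
    exact fun h => disjoint_left.mp hxy h.1 h.2
  choose a b hab using hcoord
  simpa using (show IsCoprime (e x) (e y) from ⟨a, b, funext hab⟩).map e.symm.toRingHom

lemma G2_adj_of_disjoint_Z (hp : ∀ i, (p i).Prime) (hpc : Pairwise (Nat.Coprime on p))
    {x y : Vtx m p} (hxy : Disjoint (Z m p x.1) (Z m p y.1)) : (G2 m p).Adj x y := by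
  have hcop := isCoprime_of_disjoint_Z hp hpc hxy
  refine ⟨fun h => x.2.2 ?_, ?_⟩
  · subst h
    exact isCoprime_self.mp hcop
  · rw [Ideal.eq_top_iff_one, Ideal.mem_span_pair]; exact hcop

lemma ncard_setOf_Z_eq (hp : ∀ i, (p i).Prime) (hpc : Pairwise (Nat.Coprime on p))
    (S : Finset (Fin m)) : {x : ZMod (NN m p) | Z m p x = S}.ncard = ∏ i ∈ Sᶜ, (p i - 1) := by
  have : ∀ i, NeZero (p i) := fun i => ⟨(hp i).ne_zero⟩
  let t (i : Fin m) : Finset (ZMod (p i)) := if i ∈ S then {0} else {0}ᶜ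
  have hcard : ∀ i, #(t i) = if i ∈ S then 1 else p i - 1 := fun i => by
    unfold t; split_ifs <;> simp [card_compl]
  have hset : {x | Z m p x = S} = ZMod.prodEquivPi p hpc ⁻¹' Fintype.piFinset t := by
    ext x
    simp only [Set.mem_ofPred_eq, Set.mem_preimage, mem_coe, Fintype.mem_piFinset,
      Finset.ext_iff, mem_Z_iff_prodEquivPi hpc]
    refine forall_congr' fun i => ?_
    unfold t; split_ifs <;> simp [*]
  rw [hset, Set.ncard_preimage_of_injective_subset_range (ZMod.prodEquivPi p hpc).injective
    (by simp), Set.ncard_coe_finset, Fintype.card_piFinset, ← prod_mul_prod_compl S]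
  simp only [hcard]
  rw [prod_congr rfl fun i hi => if_pos hi, prod_congr rfl fun i hi => if_neg (mem_compl.mp hi),
    prod_const_one, one_mul]

lemma ncard_XS (hp : ∀ i, (p i).Prime) (hpc : Pairwise (Nat.Coprime on p))
    {S : Finset (Fin m)} (hS : S.Nonempty) (hSu : S ≠ univ) :
    (XS m p S).ncard = ∏ i ∈ Sᶜ, (p i - 1) := by
  rw [← ncard_setOf_Z_eq hp hpc S]
  refine Set.ncard_preimage_of_injective_subset_range (s := {x | Z m p x = S})
    Subtype.val_injective ?_
  rintro x (hx : Z m p x = S)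
  obtain ⟨i, hi⟩ := hS
  obtain ⟨j, hj⟩ : ∃ j, j ∉ S := by
    by_contra! h
    exact hSu (eq_univ_iff_forall.mpr h)
  exact ⟨⟨x, ne_zero_of_notMem_Z (hx ▸ hj), not_isUnit_of_mem_Z (hp i).one_lt.ne' (hx ▸ hi)⟩, rfl⟩

end

lemma Finset.prod_erase_le_prod_erase {ι : Type*} [DecidableEq ι] {s : Finset ι} {f : ι → ℕ}
    {i j : ι} (hi : i ∈ s) (hj : j ∈ s) (hij : f i ≤ f j) :
    ∏ k ∈ s.erase j, f k ≤ ∏ k ∈ s.erase i, f k := by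
  obtain rfl | hne := eq_or_ne i j
  · rfl
  rw [← mul_prod_erase (s.erase j) f (mem_erase.mpr ⟨hne, hi⟩),
    ← mul_prod_erase (s.erase i) f (mem_erase.mpr ⟨hne.symm, hj⟩), erase_right_comm]
  exact Nat.mul_le_mul_right _ hij

theorem stmt11 (m : ℕ) (hm : 2 ≤ m) (p : Fin m → ℕ) (hp : ∀ i, (p i).Prime)
    (hmono : StrictMono p) (W : Set (Vtx m p))
    (hW : W.ncard < ∏ i ∈ Finset.univ.erase (⟨m - 1, by omega⟩ : Fin m), (p i - 1))
    (u : Vtx m p) (hu : Z m p u.1 = {(⟨m - 1, by omega⟩ : Fin m)}) (huW : u ∉ W)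
    (v : Vtx m p) (hvW : v ∉ W) (hv : (⟨m - 1, by omega⟩ : Fin m) ∈ Z m p v.1) :
    ((G2 m p).induce Wᶜ).Reachable ⟨v, hvW⟩ ⟨u, huW⟩ := by
  set M : Fin m := ⟨m - 1, by omega⟩
  have hpc : Pairwise (Nat.Coprime on p) := fun i j hij =>
    (Nat.coprime_primes (hp i) (hp j)).mpr (hmono.injective.ne hij)
  obtain ⟨j, hj⟩ := exists_notMem_Z hpc v.2.1
  have hjM : j ≠ M := by rintro rfl; exact hj hv
  have hjM_le : p j - 1 ≤ p M - 1 :=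
    Nat.sub_le_sub_right (hmono.monotone (Fin.le_def.mpr (Nat.le_sub_one_of_lt j.isLt))) 1
  have hj_ne_univ : ({j} : Finset (Fin m)) ≠ univ := fun h =>
    hjM (mem_singleton.mp (h ▸ mem_univ M)).symm
  have hcard : W.ncard < (XS m p {j}).ncard := by
    rw [ncard_XS hp hpc (singleton_nonempty j) hj_ne_univ, compl_singleton]
    exact hW.trans_le (prod_erase_le_prod_erase (mem_univ j) (mem_univ M) hjM_le)
  have : NeZero (NN m p) := ⟨prod_ne_zero_iff.mpr fun i _ => (hp i).ne_zero⟩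
  obtain ⟨w, hwj : Z m p w.1 = {j}, hwW⟩ := Set.exists_mem_notMem_of_ncard_lt_ncard hcard
  have hvw : ((G2 m p).induce Wᶜ).Adj ⟨v, hvW⟩ ⟨w, hwW⟩ :=
    G2_adj_of_disjoint_Z hp hpc (show Disjoint (Z m p v.1) (Z m p w.1) by
      rw [hwj]; exact disjoint_singleton_right.mpr hj)
  have hwu : ((G2 m p).induce Wᶜ).Adj ⟨w, hwW⟩ ⟨u, huW⟩ :=
    G2_adj_of_disjoint_Z hp hpc (show Disjoint (Z m p w.1) (Z m p u.1) by
      rw [hwj, hu]; exact disjoint_singleton.mpr hjM)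
  exact hvw.reachable.trans hwu.reachable
end
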